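/- Let κ(x) = ⌊log x / log 2⌋ and L(x) = Σ_{k=2}^{κ(x)} (log² x)/(8π k² x^{1/3 - 1/(2k)}) for x ≥ 4. Then for every integer j ≥ 35 and every real x ≥ 2^j, L(x) ≤ L(2^j). -/

import Mathlib

/-- `κ(x) = ⌊log x / log 2⌋`, the largest integer `k` with `x^(1/k) ≥ 2`. -/
noncomputable def kappa (x : ℝ) : ℕ := ⌊Real.log x / Real.log 2⌋₊

/-- `L(x) = ∑_{k=2}^{κ(x)} (log² x)/(8π k² x^(1/3 - 1/(2k)))`. -/
noncomputable def L (x : ℝ) : ℝ :=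
  ∑ k ∈ Finset.Icc 2 (kappa x),
    (Real.log x) ^ 2 / (8 * Real.pi * (k : ℝ) ^ 2 * x ^ ((1 : ℝ) / 3 - 1 / (2 * k)))

/-!
For `2 ^ m ≤ x < 2 ^ (m + 1)` we have `κ(x) = m`, and each summand `log² x / x ^ α` with
`α = 1/3 - 1/(2k) ≥ 1/12` is decreasing once `x ≥ exp (2 / α)`, in particular for
`x ≥ 2 ^ 35`. So `L x ≤ L (2 ^ κ(x))`, and it remains to see that `m ↦ L (2 ^ m)` decreases
for `m ≥ 35`. Going from `2 ^ m` to `2 ^ (m + 1)` adds one summand `k = m + 1`, of size about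
`2 ^ (-m/3)`; it is absorbed by the drop of the `k = 2` summand `m² 2 ^ (-m/12)` by the
factor `2 ^ (-1/12)`.
-/

open Real Set

lemma log_sq_div_rpow_antitoneOn {a : ℝ} (ha : 0 < a) :
    AntitoneOn (fun x : ℝ ↦ log x ^ 2 / x ^ a) (Ici (exp (2 / a))) := by
  intro x hx y hy hxy
  have hpos : ∀ z ∈ Ici (exp (2 / a)), 0 < z := fun z hz ↦ (exp_pos _).trans_le hz
  have hsq : ∀ z ∈ Ici (exp (2 / a)), log z ^ 2 / z ^ a = (log z / z ^ (a / 2)) ^ 2 := by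
    intro z hz
    rw [div_pow, ← rpow_natCast (z ^ (a / 2)), ← rpow_mul (hpos z hz).le]
    norm_num
  have hnonneg : 0 ≤ log y / y ^ (a / 2) :=
    div_nonneg (log_nonneg ((one_le_exp (by positivity)).trans hy))
      (rpow_nonneg (hpos y hy).le _)
  simp only [hsq x hx, hsq y hy]
  rw [← inv_div] at hx hy
  exact pow_le_pow_left₀ hnonneg (log_div_self_rpow_antitoneOn (half_pos ha) hx hy hxy) 2

lemma kappa_eq_floor_logb (x : ℝ) : kappa x = ⌊logb 2 x⌋₊ := rfl

lemma kappa_two_pow (m : ℕ) : kappa (2 ^ m) = m := by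
  simp [kappa_eq_floor_logb, logb_pow]

lemma le_kappa_of_two_pow_le {j : ℕ} {x : ℝ} (hx : 2 ^ j ≤ x) : j ≤ kappa x := by
  rw [← kappa_two_pow j]
  exact Nat.floor_le_floor (logb_le_logb_of_le one_lt_two (by positivity) hx)

lemma two_pow_kappa_le {x : ℝ} (hx : 1 ≤ x) : (2 : ℝ) ^ kappa x ≤ x := by
  rw [← rpow_natCast, ← le_logb_iff_rpow_le one_lt_two (by linarith)]
  exact Nat.floor_le (logb_nonneg one_lt_two hx)

noncomputable def Lterm (k : ℕ) (x : ℝ) : ℝ :=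
  log x ^ 2 / (8 * π * (k : ℝ) ^ 2 * x ^ ((1 : ℝ) / 3 - 1 / (2 * k)))

lemma L_eq_sum_Lterm (x : ℝ) : L x = ∑ k ∈ Finset.Icc 2 (kappa x), Lterm k x := rfl

lemma one_twelfth_le_exponent {k : ℕ} (hk : 2 ≤ k) :
    (1 : ℝ) / 12 ≤ 1 / 3 - 1 / (2 * k) := by
  have hk' : (2 : ℝ) ≤ k := by exact_mod_cast hk
  have : 1 / (2 * (k : ℝ)) ≤ 1 / 4 := by
    rw [div_le_div_iff₀ (by positivity) (by norm_num)]; linarith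
  linarith

lemma exp_twentyfour_le_two_pow : exp 24 ≤ 2 ^ 35 := by
  rw [← exp_log (by norm_num : (0 : ℝ) < 2 ^ 35), log_pow, exp_le_exp, Nat.cast_ofNat]
  linarith [log_two_gt_d9]

lemma Lterm_antitoneOn {k : ℕ} (hk : 2 ≤ k) : AntitoneOn (Lterm k) (Ici (2 ^ 35)) := by
  have hα := one_twelfth_le_exponent hk
  have hαpos : (0 : ℝ) < 1 / 3 - 1 / (2 * k) := by linarith
  have hsub : Ici ((2 : ℝ) ^ 35) ⊆ Ici (exp (2 / (1 / 3 - 1 / (2 * k)))) := by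
    refine Ici_subset_Ici.2 (le_trans (exp_le_exp.2 ?_) exp_twentyfour_le_two_pow)
    rw [div_le_iff₀ hαpos]; linarith
  have hsplit : ∀ z, Lterm k z =
      log z ^ 2 / z ^ ((1 : ℝ) / 3 - 1 / (2 * k)) / (8 * π * k ^ 2) :=
    fun z ↦ by rw [Lterm, div_div, mul_comm]
  intro x hx y hy hxy
  rw [hsplit, hsplit]
  exact div_le_div_of_nonneg_right
    (log_sq_div_rpow_antitoneOn hαpos (hsub hx) (hsub hy) hxy) (by positivity)

lemma L_le_L_two_pow_kappa {x : ℝ} (hx : 2 ^ 35 ≤ x) : L x ≤ L (2 ^ kappa x) := by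
  have h35 : 35 ≤ kappa x := le_kappa_of_two_pow_le hx
  rw [L_eq_sum_Lterm, L_eq_sum_Lterm, kappa_two_pow]
  refine Finset.sum_le_sum fun k hk ↦ Lterm_antitoneOn (Finset.mem_Icc.1 hk).1 ?_ hx ?_
  · exact pow_le_pow_right₀ (one_le_two (α := ℝ)) h35
  · exact two_pow_kappa_le ((one_le_pow₀ one_le_two).trans hx)

lemma Lterm_two_pow (k n : ℕ) :
    Lterm k (2 ^ n) =
      log 2 ^ 2 / (8 * π) * (n ^ 2 / (k ^ 2 * 2 ^ (n * ((1 : ℝ) / 3 - 1 / (2 * k))))) := by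
  rw [Lterm, log_pow, ← rpow_natCast 2 n, ← rpow_mul zero_le_two]
  ring

lemma le_two_rpow_one_twelfth : (1.059 : ℝ) ≤ 2 ^ ((1 : ℝ) / 12) := by
  rw [one_div, le_rpow_inv_iff_of_pos (by norm_num) zero_le_two (by norm_num),
    show (12 : ℝ) = (12 : ℕ) by norm_num, rpow_natCast]
  norm_num

lemma two_rpow_estimate {M : ℝ} (hM : 35 ≤ M) :
    (M + 1) ^ 2 / (4 * 2 ^ ((M + 1) / 12)) + 1 / 2 ^ ((M + 1) / 3 - 1 / 2) ≤
      M ^ 2 / (4 * 2 ^ (M / 12)) := by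
  set t : ℝ := 2 ^ ((1 : ℝ) / 12)
  set w : ℝ := 2 ^ (M / 12)
  have ht : 1.059 ≤ t := le_two_rpow_one_twelfth
  have hw : 0 < w := by positivity
  have hu : (2 : ℝ) ^ ((M + 1) / 12) = t * w := by
    rw [← rpow_add two_pos]; ring_nf
  have hv : 256 * (t * w) ≤ 2 ^ ((M + 1) / 3 - 1 / 2) := by
    have h256 : (256 : ℝ) ≤ 2 ^ ((M + 1) / 4 - 1 / 2) := by
      calc (256 : ℝ) = 2 ^ (8 : ℝ) := by norm_num
        _ ≤ _ := rpow_le_rpow_of_exponent_le one_le_two (by linarith)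
    calc 256 * (t * w) ≤ 2 ^ ((M + 1) / 4 - 1 / 2) * 2 ^ ((M + 1) / 12) := by
          rw [hu]; gcongr
      _ = 2 ^ ((M + 1) / 3 - 1 / 2) := by rw [← rpow_add two_pos]; ring_nf
  calc (M + 1) ^ 2 / (4 * 2 ^ ((M + 1) / 12)) + 1 / 2 ^ ((M + 1) / 3 - 1 / 2)
      ≤ (M + 1) ^ 2 / (4 * (t * w)) + 1 / (256 * (t * w)) := by rw [hu]; gcongr
    _ = ((M + 1) ^ 2 + 1 / 64) / (4 * (t * w)) := by field_simp; ring
    -- `(M + 1) ^ 2 + 1 / 64 ≤ 1.059 * M ^ 2` is where `M ≥ 35` is needed.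
    _ ≤ M ^ 2 * t / (4 * (t * w)) := by gcongr; nlinarith
    _ = M ^ 2 / (4 * w) := by field_simp

lemma Lterm_two_pow_succ_add_le {m : ℕ} (hm : 35 ≤ m) :
    Lterm 2 (2 ^ (m + 1)) + Lterm (m + 1) (2 ^ (m + 1)) ≤ Lterm 2 (2 ^ m) := by
  have hestimate := two_rpow_estimate (M := m) (by exact_mod_cast hm)
  have hk2 : ∀ n : ℝ, n * ((1 : ℝ) / 3 - 1 / (2 * 2)) = n / 12 := fun n ↦ by ring
  have hkm : ((m : ℝ) + 1) * (1 / 3 - 1 / (2 * ((m : ℝ) + 1))) = (m + 1) / 3 - 1 / 2 := by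
    field_simp
  rw [Lterm_two_pow, Lterm_two_pow, Lterm_two_pow, ← mul_add]
  refine mul_le_mul_of_nonneg_left ?_ (by positivity)
  push_cast
  rw [hk2, hk2, hkm, div_mul_cancel_left₀ (by positivity), ← one_div]
  rwa [show (2 : ℝ) ^ 2 = 4 by norm_num]

lemma L_two_pow_succ_le {m : ℕ} (hm : 35 ≤ m) : L (2 ^ (m + 1)) ≤ L (2 ^ m) := by
  have h35 : (2 : ℝ) ^ 35 ≤ 2 ^ m := pow_le_pow_right₀ one_le_two hm
  have hmono : (2 : ℝ) ^ m ≤ 2 ^ (m + 1) := pow_le_pow_right₀ one_le_two m.le_succ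
  have hmiddle : ∑ k ∈ Finset.Ioc 2 m, Lterm k (2 ^ (m + 1)) ≤
      ∑ k ∈ Finset.Ioc 2 m, Lterm k (2 ^ m) :=
    Finset.sum_le_sum fun k hk ↦
      Lterm_antitoneOn (Finset.mem_Ioc.1 hk).1.le h35 (h35.trans hmono) hmono
  rw [L_eq_sum_Lterm, L_eq_sum_Lterm, kappa_two_pow, kappa_two_pow,
    Finset.sum_Icc_succ_top (by omega), ← Finset.add_sum_Ioc_eq_sum_Icc (by omega),
    ← Finset.add_sum_Ioc_eq_sum_Icc (by omega)]
  linarith [Lterm_two_pow_succ_add_le hm]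

theorem L_le (j : ℕ) (hj : 35 ≤ j) (x : ℝ) (hx : (2 : ℝ) ^ j ≤ x) : L x ≤ L ((2 : ℝ) ^ j) := by
  have hjκ : j ≤ kappa x := le_kappa_of_two_pow_le hx
  have hanti : AntitoneOn (fun m : ℕ ↦ L (2 ^ m)) {m | 35 ≤ m} :=
    antitoneOn_nat_Ici_of_succ_le fun m hm ↦ L_two_pow_succ_le hm
  calc L x ≤ L (2 ^ kappa x) :=
        L_le_L_two_pow_kappa ((pow_le_pow_right₀ one_le_two hj).trans hx)
    _ ≤ L (2 ^ j) := hanti hj (hj.trans hjκ) hjκ
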